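/- Exactness of the misclassification encoding (C₁₉–C₂₀): let c ≥ 1 and k be natural numbers with c ≤ 2^k, v : Fin c → ℝ a vector of output activations, l : Fin c a label, and M ∈ ℝ with M ≥ v i − v j for all i, j. Writing bitⱼ(z) = 1 if Nat.testBit z j is true and 0 otherwise, and identifying z : Fin c with its underlying natural number, the following are equivalent: (a) there exists j : Fin c with j ≠ l and v l ≤ v j; (b) there exists δ : Fin k → ℝ with (δ j = 0 or δ j = 1) for every j such that: for every z : Fin c with z ≠ l, v l ≤ v z + M · Σⱼ (bitⱼ(z) + (1 − 2·bitⱼ(z))·δ j); Σⱼ (bitⱼ(l) + (1 − 2·bitⱼ(l))·δ j) ≥ 1; and for every natural number z with c ≤ z < 2^k, Σⱼ (bitⱼ(z) + (1 − 2·bitⱼ(z))·δ j) ≥ 1. -/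

import Mathlib

/-!
With `δ` a 0/1 vector, the sum `∑ⱼ (bitⱼ(z) + (1 - 2 bitⱼ(z)) δⱼ)` counts the positions `j < k` where
the bits of `z` and of the number `n < 2 ^ k` with bits `δ` differ, i.e. it is the Hamming distance of
`z` and `n`. It vanishes for `z = n` and is at least `1` otherwise, so C₂₀ says exactly that `n` is a
class other than `l`, C₁₉ is vacuous (by the choice of `M`) for `z ≠ n`, and for `z = n` it reads
`v l ≤ v n`.
-/

open Finset

/-- The `j`-th binary digit of `z` (least significant bit first), as a real. -/
def bitR (z j : ℕ) : ℝ := if Nat.testBit z j then 1 else 0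

/-- The bit-mismatch sum of constraints C₁₉–C₂₀. -/
def bitMismatch {k : ℕ} (z : ℕ) (δ : Fin k → ℝ) : ℝ :=
  ∑ j : Fin k, (bitR z j + (1 - 2 * bitR z j) * δ j)

lemma bitR_eq_zero_or_eq_one (z j : ℕ) : bitR z j = 0 ∨ bitR z j = 1 := by
  unfold bitR
  split <;> simp

lemma bitR_add_mul_bitR (z n j : ℕ) :
    bitR z j + (1 - 2 * bitR z j) * bitR n j = if z.testBit j ≠ n.testBit j then 1 else 0 := by
  unfold bitR
  cases z.testBit j <;> cases n.testBit j <;> norm_num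

lemma bitMismatch_bitR_eq_card (k z n : ℕ) :
    bitMismatch z (fun j : Fin k => bitR n j) = #{j : Fin k | z.testBit j ≠ n.testBit j} := by
  simp only [bitMismatch, bitR_add_mul_bitR]
  exact sum_boole _ _

lemma bitMismatch_bitR_self (k z : ℕ) : bitMismatch z (fun j : Fin k => bitR z j) = 0 := by
  simp [bitMismatch_bitR_eq_card]

lemma one_le_bitMismatch_bitR_iff {k z n : ℕ} (hz : z < 2 ^ k) (hn : n < 2 ^ k) :
    1 ≤ bitMismatch z (fun j : Fin k => bitR n j) ↔ z ≠ n := by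
  rw [bitMismatch_bitR_eq_card, Nat.one_le_cast, Nat.one_le_iff_ne_zero, Ne, Ne, not_iff_not,
    card_eq_zero, filter_eq_empty_iff]
  simp only [mem_univ, true_implies, not_not]
  refine ⟨fun hbits => Nat.eq_of_testBit_eq fun i => ?_, fun hzn _ => by rw [hzn]⟩
  by_cases hik : i < k
  · exact hbits (x := ⟨i, hik⟩)
  · have hpow : 2 ^ k ≤ 2 ^ i := Nat.pow_le_pow_right two_pos (not_lt.mp hik)
    rw [Nat.testBit_lt_two_pow (hz.trans_le hpow), Nat.testBit_lt_two_pow (hn.trans_le hpow)]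

lemma exists_eq_bitR_of_binary {k : ℕ} {δ : Fin k → ℝ} (hδ : ∀ j, δ j = 0 ∨ δ j = 1) :
    ∃ n < 2 ^ k, δ = fun j : Fin k => bitR n j := by
  refine ⟨Nat.ofBits fun j => decide (δ j = 1), Nat.ofBits_lt_two_pow _, funext fun j => ?_⟩
  rw [bitR, Nat.testBit_ofBits_lt _ _ j.isLt]
  rcases hδ j with h | h <;> simp [h]

theorem misclassification_encoding_exact_general (c k : ℕ)
    (hck : c ≤ 2 ^ k) (v : Fin c → ℝ) (l : Fin c) (M : ℝ)
    (hM : ∀ i j, M ≥ v i - v j) :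
    (∃ j : Fin c, j ≠ l ∧ v l ≤ v j) ↔
      ∃ δ : Fin k → ℝ, (∀ j, δ j = 0 ∨ δ j = 1) ∧
        (∀ z : Fin c, z ≠ l →
          v l ≤ v z + M * ∑ j : Fin k, (bitR (z : ℕ) j + (1 - 2 * bitR (z : ℕ) j) * δ j)) ∧
        (1 ≤ ∑ j : Fin k, (bitR (l : ℕ) j + (1 - 2 * bitR (l : ℕ) j) * δ j)) ∧
        (∀ z : ℕ, c ≤ z → z < 2 ^ k →
          1 ≤ ∑ j : Fin k, (bitR z j + (1 - 2 * bitR z j) * δ j)) := by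
  have hlt (z : Fin c) : (z : ℕ) < 2 ^ k := z.isLt.trans_le hck
  constructor
  · rintro ⟨n, hnl, hvn⟩
    refine ⟨fun j => bitR n j, fun j => bitR_eq_zero_or_eq_one n j, fun z _ => ?_, ?_,
      fun z hcz hz => ?_⟩
    · by_cases hzn : z = n
      · subst hzn
        change v l ≤ v z + M * bitMismatch z _
        simpa [bitMismatch_bitR_self] using hvn
      · have hone := (one_le_bitMismatch_bitR_iff (hlt z) (hlt n)).mpr (Fin.val_ne_of_ne hzn)
        have hM0 : 0 ≤ M := by simpa using hM l l
        change v l ≤ v z + M * bitMismatch z _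
        linarith [hM l z, le_mul_of_one_le_right hM0 hone]
    · exact (one_le_bitMismatch_bitR_iff (hlt l) (hlt n)).mpr (Fin.val_ne_of_ne hnl.symm)
    · exact (one_le_bitMismatch_bitR_iff hz (hlt n)).mpr (by omega)
  · rintro ⟨δ, hδ, hC19, hCl, hChigh⟩
    obtain ⟨n, hn, rfl⟩ := exists_eq_bitR_of_binary hδ
    have hnc : n < c := not_le.mp fun hcn =>
      (one_le_bitMismatch_bitR_iff hn hn).mp (hChigh n hcn hn) rfl
    have hnl : (⟨n, hnc⟩ : Fin c) ≠ l := fun h =>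
      (one_le_bitMismatch_bitR_iff (hlt l) hn).mp hCl (by rw [← h])
    refine ⟨⟨n, hnc⟩, hnl, ?_⟩
    have h := hC19 ⟨n, hnc⟩ hnl
    change v l ≤ v _ + M * bitMismatch n _ at h
    simpa [bitMismatch_bitR_self] using h

/-- Exactness of the misclassification encoding (C₁₉–C₂₀). -/
theorem misclassification_encoding_exact (c k : ℕ) (hc : 1 ≤ c)
    (hck : c ≤ 2 ^ k) (v : Fin c → ℝ) (l : Fin c) (M : ℝ)
    (hM : ∀ i j, M ≥ v i - v j) :
    (∃ j : Fin c, j ≠ l ∧ v l ≤ v j) ↔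
      ∃ δ : Fin k → ℝ, (∀ j, δ j = 0 ∨ δ j = 1) ∧
        (∀ z : Fin c, z ≠ l →
          v l ≤ v z + M * ∑ j : Fin k, (bitR (z : ℕ) j + (1 - 2 * bitR (z : ℕ) j) * δ j)) ∧
        (1 ≤ ∑ j : Fin k, (bitR (l : ℕ) j + (1 - 2 * bitR (l : ℕ) j) * δ j)) ∧
        (∀ z : ℕ, c ≤ z → z < 2 ^ k →
          1 ≤ ∑ j : Fin k, (bitR z j + (1 - 2 * bitR z j) * δ j)) :=
  misclassification_encoding_exact_general c k hck v l M hM
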